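/- arXiv:2305.18262 — 2 statements merged into one kernel-verified Lean document; each statement's English description precedes it below -/
import Mathlib

section
/- The function z ↦ z · σ'(z), where σ'(z) = σ(z)(1-σ(z)) is the derivative of the sigmoid, is monotonically increasing on the interval [-1, 1]. -/
/-!
The derivative of `z ↦ z σ'(z)` is `σ'(z) (1 + z (1 - 2σ(z)))`, and
`1 + z (1 - 2σ) = (1 + z)(1 - σ) + (1 - z) σ` is a sum of nonnegative terms when `|z| ≤ 1`,
because `0 < σ < 1`.
-/

noncomputable def sigmoid (x : ℝ) : ℝ := 1 / (1 + Real.exp (-x))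

theorem sigmoid_eq_real_sigmoid : sigmoid = Real.sigmoid :=
  funext fun _ => one_div _

theorem hasDerivAt_mul_sigmoid_deriv (x : ℝ) :
    HasDerivAt (fun z => z * (Real.sigmoid z * (1 - Real.sigmoid z)))
      (Real.sigmoid x * (1 - Real.sigmoid x) * (1 + x * (1 - 2 * Real.sigmoid x))) x := by
  have hσ := Real.hasDerivAt_sigmoid x
  exact ((hasDerivAt_id' x).fun_mul (hσ.fun_mul (hσ.const_sub 1))).congr_deriv (by ring)

theorem one_add_mul_one_sub_two_mul_nonneg {x s : ℝ} (hx₁ : -1 ≤ x) (hx₂ : x ≤ 1)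
    (hs₀ : 0 ≤ s) (hs₁ : s ≤ 1) : 0 ≤ 1 + x * (1 - 2 * s) := by
  calc 0 ≤ (1 + x) * (1 - s) + (1 - x) * s := by
        apply add_nonneg <;> apply mul_nonneg <;> linarith
    _ = 1 + x * (1 - 2 * s) := by ring

/-- The function `z ↦ z · σ'(z)`, where `σ'(z) = σ(z)(1-σ(z))` is the derivative of the
sigmoid, is monotonically increasing on the interval `[-1, 1]`. -/
theorem mul_sigmoid_deriv_monotoneOn :
    MonotoneOn (fun z : ℝ => z * (sigmoid z * (1 - sigmoid z))) (Set.Icc (-1 : ℝ) 1) := by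
  rw [sigmoid_eq_real_sigmoid]
  refine monotoneOn_of_hasDerivWithinAt_nonneg (convex_Icc _ _)
    (fun x _ => (hasDerivAt_mul_sigmoid_deriv x).continuousAt.continuousWithinAt)
    (fun x _ => (hasDerivAt_mul_sigmoid_deriv x).hasDerivWithinAt) ?_
  intro x hx
  rw [interior_Icc] at hx
  have hσ₀ := Real.sigmoid_nonneg x
  have hσ₁ := Real.sigmoid_le_one x
  exact mul_nonneg (mul_nonneg hσ₀ (sub_nonneg.2 hσ₁))
    (one_add_mul_one_sub_two_mul_nonneg hx.1.le hx.2.le hσ₀ hσ₁)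
end

section
/- For fixed K and δ ∈ (0,1), as K → ∞, z_{(K+δ)/(K+1)} - z_{K/(K+1)} = (-log(1-δ))/√(2 log K) + o(1/√(log K)), where z_α is the standard normal α-quantile. -/
/-!
Write `q(ε) = z_{1-ε}`, so that the Gaussian tail satisfies `Φ̄(q(ε)) = ε`. Since
`(1 + t⁻²) φ(t) = -(φ(t)/t)'`, integrating over `(x, ∞)` gives Mills' bounds
`Φ̄(x) ≤ φ(x)/x ≤ (1 + x⁻²) Φ̄(x)`, hence `q²/2 + log q = log ε⁻¹ - log √(2π) + o(1)`
as `ε → 0⁺`. This gives `q(ε)² ~ 2 log ε⁻¹`, so `log q(cε) - log q(ε) → 0`, and subtracting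
the relation at `ε` from the one at `cε` yields `q(cε)² - q(ε)² → 2 log c⁻¹`. Dividing by
`q(cε) + q(ε) ~ 2 √(2 log ε⁻¹)` gives `(q(cε) - q(ε)) √(log ε⁻¹) → log c⁻¹ / √2`; the theorem
is the case `ε = 1/(K+1)`, `c = 1 - δ`, where `log (K+1) / log K → 1`.
-/

open MeasureTheory ProbabilityTheory Filter

/-- The standard normal CDF. -/
noncomputable def stdNormalCDF (x : ℝ) : ℝ := ((gaussianReal 0 1) (Set.Iic x)).toReal

/-- The standard normal quantile function `z_α = Φ⁻¹(α)`. -/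
noncomputable def stdNormalQuantile (α : ℝ) : ℝ := sInf {x : ℝ | α ≤ stdNormalCDF x}

open Real Set Topology

local notation "φ" => gaussianPDFReal 0 1

lemma gaussianPDFReal_zero_one (x : ℝ) : φ x = (√(2 * π))⁻¹ * exp (-(x ^ 2 / 2)) := by
  simp [gaussianPDFReal, neg_div]

lemma log_gaussianPDFReal_zero_one (x : ℝ) : log (φ x) = -(x ^ 2 / 2) - log √(2 * π) := by
  rw [gaussianPDFReal_zero_one, log_mul (by positivity) (exp_ne_zero _), log_inv, log_exp]
  ring

lemma hasDerivAt_gaussianPDFReal_zero_one (x : ℝ) : HasDerivAt φ (-x * φ x) x := by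
  have h : HasDerivAt (fun t : ℝ => -(t ^ 2 / 2)) (-x) x :=
    ((hasDerivAt_pow 2 x).div_const 2).fun_neg.congr_deriv (by ring)
  rw [funext gaussianPDFReal_zero_one]
  exact (h.exp.const_mul _).congr_deriv (by ring)

lemma tendsto_gaussianPDFReal_zero_one_atTop : Tendsto φ atTop (𝓝 0) := by
  have h : Tendsto (fun x : ℝ => -(x ^ 2 / 2)) atTop atBot :=
    tendsto_neg_atTop_atBot.comp ((tendsto_pow_atTop two_ne_zero).atTop_div_const two_pos)
  simpa [funext gaussianPDFReal_zero_one] using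
    (tendsto_exp_comp_nhds_zero.2 h).const_mul (√(2 * π))⁻¹

noncomputable def stdNormalTail (x : ℝ) : ℝ := ∫ t in Ioi x, φ t

lemma stdNormalCDF_eq_integral (x : ℝ) : stdNormalCDF x = ∫ t in Iic x, φ t := by
  rw [stdNormalCDF, gaussianReal_apply_eq_integral 0 one_ne_zero,
    ENNReal.toReal_ofReal
      (setIntegral_nonneg measurableSet_Iic fun t _ => gaussianPDFReal_nonneg 0 1 t)]

lemma stdNormalCDF_eq_cdf : stdNormalCDF = cdf (gaussianReal 0 1) := by
  ext x
  rw [cdf_eq_real, measureReal_def, stdNormalCDF]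

lemma stdNormalCDF_add_stdNormalTail (x : ℝ) : stdNormalCDF x + stdNormalTail x = 1 := by
  rw [stdNormalCDF_eq_integral, stdNormalTail, ← compl_Iic,
    integral_add_compl measurableSet_Iic (integrable_gaussianPDFReal 0 1),
    integral_gaussianPDFReal_eq_one 0 one_ne_zero]

lemma stdNormalCDF_sub_stdNormalCDF (a b : ℝ) :
    stdNormalCDF b - stdNormalCDF a = ∫ t in a..b, φ t := by
  rw [stdNormalCDF_eq_integral, stdNormalCDF_eq_integral,
    intervalIntegral.integral_Iic_sub_Iic (integrable_gaussianPDFReal 0 1).integrableOn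
      (integrable_gaussianPDFReal 0 1).integrableOn]

lemma strictMono_stdNormalCDF : StrictMono stdNormalCDF := fun a b hab => by
  rw [← sub_pos, stdNormalCDF_sub_stdNormalCDF]
  exact intervalIntegral.intervalIntegral_pos_of_pos_on
    (integrable_gaussianPDFReal 0 1).intervalIntegrable
    (fun t _ => gaussianPDFReal_pos 0 1 t one_ne_zero) hab

lemma continuous_stdNormalCDF : Continuous stdNormalCDF := by
  have h : stdNormalCDF = fun x => stdNormalCDF 0 + ∫ t in (0 : ℝ)..x, φ t := by
    ext x
    rw [← stdNormalCDF_sub_stdNormalCDF]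
    ring
  rw [h]
  exact continuous_const.add (intervalIntegral.continuous_primitive
    (fun _ _ => (integrable_gaussianPDFReal 0 1).intervalIntegrable) 0)

lemma stdNormalCDF_lt_one (x : ℝ) : stdNormalCDF x < 1 :=
  (strictMono_stdNormalCDF (lt_add_one x)).trans_le
    (stdNormalCDF_eq_cdf ▸ cdf_le_one _ _)

lemma stdNormalTail_pos (x : ℝ) : 0 < stdNormalTail x := by
  linarith [stdNormalCDF_add_stdNormalTail x, stdNormalCDF_lt_one x]

lemma stdNormalCDF_stdNormalQuantile {α : ℝ} (hα : α ∈ Ioo 0 1) :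
    stdNormalCDF (stdNormalQuantile α) = α := by
  have hbot : Tendsto stdNormalCDF atBot (𝓝 0) := stdNormalCDF_eq_cdf ▸ tendsto_cdf_atBot _
  have htop : Tendsto stdNormalCDF atTop (𝓝 1) := stdNormalCDF_eq_cdf ▸ tendsto_cdf_atTop _
  obtain ⟨x, rfl⟩ : α ∈ range stdNormalCDF :=
    mem_range_of_exists_le_of_exists_ge continuous_stdNormalCDF
      (hbot.eventually (eventually_le_nhds hα.1)).exists
      (htop.eventually (eventually_ge_nhds hα.2)).exists
  have h : {y | stdNormalCDF x ≤ stdNormalCDF y} = Ici x := by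
    ext y; exact strictMono_stdNormalCDF.le_iff_le
  rw [stdNormalQuantile, h, csInf_Ici]

lemma stdNormalTail_stdNormalQuantile_one_sub {ε : ℝ} (hε : ε ∈ Ioo 0 1) :
    stdNormalTail (stdNormalQuantile (1 - ε)) = ε := by
  have h := stdNormalCDF_add_stdNormalTail (stdNormalQuantile (1 - ε))
  rw [stdNormalCDF_stdNormalQuantile ⟨by linarith [hε.2], by linarith [hε.1]⟩] at h
  linarith

lemma tendsto_stdNormalQuantile_one_sub :
    Tendsto (fun ε => stdNormalQuantile (1 - ε)) (𝓝[>] 0) atTop := by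
  refine tendsto_atTop.2 fun M => ?_
  filter_upwards [Ioo_mem_nhdsGT (stdNormalTail_pos M), Ioo_mem_nhdsGT one_pos] with ε hεM hε
  rw [← strictMono_stdNormalCDF.le_iff_le]
  linarith [hεM.2, stdNormalCDF_add_stdNormalTail M,
    stdNormalCDF_add_stdNormalTail (stdNormalQuantile (1 - ε)),
    stdNormalTail_stdNormalQuantile_one_sub hε]

lemma hasDerivAt_neg_gaussianPDFReal_zero_one_div {t : ℝ} (ht : t ≠ 0) :
    HasDerivAt (fun t => -(φ t / t)) ((1 + (t ^ 2)⁻¹) * φ t) t := by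
  refine ((hasDerivAt_gaussianPDFReal_zero_one t).div (hasDerivAt_id t) ht).neg.congr_deriv
    ?_
  simp only [id]
  field_simp
  ring

lemma tendsto_neg_gaussianPDFReal_zero_one_div_atTop :
    Tendsto (fun t => -(φ t / t)) atTop (𝓝 0) := by
  simpa [div_eq_mul_inv] using
    (tendsto_gaussianPDFReal_zero_one_atTop.mul tendsto_inv_atTop_zero).neg

lemma integrableOn_one_add_inv_sq_mul_gaussianPDFReal_zero_one {x : ℝ} (hx : 0 < x) :
    IntegrableOn (fun t => (1 + (t ^ 2)⁻¹) * φ t) (Ioi x) :=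
  integrableOn_Ioi_deriv_of_nonneg'
    (fun t ht => hasDerivAt_neg_gaussianPDFReal_zero_one_div (hx.trans_le ht).ne')
    (fun t _ => by have := gaussianPDFReal_nonneg 0 1 t; positivity)
    tendsto_neg_gaussianPDFReal_zero_one_div_atTop

lemma integral_one_add_inv_sq_mul_gaussianPDFReal_zero_one {x : ℝ} (hx : 0 < x) :
    ∫ t in Ioi x, (1 + (t ^ 2)⁻¹) * φ t = φ x / x := by
  rw [integral_Ioi_of_hasDerivAt_of_nonneg'
    (fun t ht => hasDerivAt_neg_gaussianPDFReal_zero_one_div (hx.trans_le ht).ne')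
    (fun t _ => by have := gaussianPDFReal_nonneg 0 1 t; positivity)
    tendsto_neg_gaussianPDFReal_zero_one_div_atTop]
  ring

lemma stdNormalTail_le_gaussianPDFReal_div {x : ℝ} (hx : 0 < x) : stdNormalTail x ≤ φ x / x := by
  rw [← integral_one_add_inv_sq_mul_gaussianPDFReal_zero_one hx, stdNormalTail]
  refine setIntegral_mono_on (integrable_gaussianPDFReal 0 1).integrableOn
    (integrableOn_one_add_inv_sq_mul_gaussianPDFReal_zero_one hx) measurableSet_Ioi fun t _ => ?_
  have := gaussianPDFReal_nonneg 0 1 t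
  nlinarith [inv_nonneg.2 (sq_nonneg t)]

lemma gaussianPDFReal_div_le_stdNormalTail {x : ℝ} (hx : 0 < x) :
    φ x / x ≤ (1 + (x ^ 2)⁻¹) * stdNormalTail x := by
  rw [← integral_one_add_inv_sq_mul_gaussianPDFReal_zero_one hx, stdNormalTail,
    ← integral_const_mul]
  refine setIntegral_mono_on (integrableOn_one_add_inv_sq_mul_gaussianPDFReal_zero_one hx)
    ((integrable_gaussianPDFReal 0 1).integrableOn.const_mul _) measurableSet_Ioi fun t ht => ?_
  have h : (t ^ 2)⁻¹ ≤ (x ^ 2)⁻¹ := by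
    gcongr
    exact ht.le
  exact mul_le_mul_of_nonneg_right (by linarith) (gaussianPDFReal_nonneg 0 1 t)

lemma tendsto_mul_stdNormalTail_div_gaussianPDFReal :
    Tendsto (fun x => x * stdNormalTail x / φ x) atTop (𝓝 1) := by
  have hlow : Tendsto (fun x : ℝ => (1 + (x ^ 2)⁻¹)⁻¹) atTop (𝓝 1) := by
    simpa using ((tendsto_inv_atTop_zero.comp (tendsto_pow_atTop (α := ℝ) two_ne_zero)).const_add
      1).inv₀ (by norm_num)
  refine tendsto_of_tendsto_of_tendsto_of_le_of_le' hlow tendsto_const_nhds ?_ ?_ <;>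
    filter_upwards [eventually_gt_atTop 0] with x hx <;>
    have hφ := gaussianPDFReal_pos 0 1 x one_ne_zero
  · rw [inv_le_iff_one_le_mul₀ (by positivity), div_mul_eq_mul_div, le_div_iff₀ hφ]
    have := gaussianPDFReal_div_le_stdNormalTail hx
    rw [div_le_iff₀ hx] at this
    linarith
  · rw [div_le_one hφ]
    have := stdNormalTail_le_gaussianPDFReal_div hx
    rwa [le_div_iff₀ hx, mul_comm] at this

lemma sq_div_two_add_log_eq_neg_log_stdNormalTail {x : ℝ} (hx : 0 < x) :
    x ^ 2 / 2 + log x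
      = -log (stdNormalTail x) - log √(2 * π) + log (x * stdNormalTail x / φ x) := by
  rw [log_div (mul_pos hx (stdNormalTail_pos x)).ne' (gaussianPDFReal_pos 0 1 x one_ne_zero).ne',
    log_mul hx.ne' (stdNormalTail_pos x).ne', log_gaussianPDFReal_zero_one]
  ring

lemma tendsto_log_div_sq_atTop : Tendsto (fun x : ℝ => log x / x ^ 2) atTop (𝓝 0) := by
  simpa [rpow_two] using (isLittleO_log_rpow_atTop two_pos).tendsto_div_nhds_zero

lemma tendsto_log_inv_nhdsGT_zero : Tendsto (fun ε : ℝ => log ε⁻¹) (𝓝[>] 0) atTop :=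
  tendsto_log_atTop.comp tendsto_inv_nhdsGT_zero

lemma tendsto_const_mul_nhdsGT_zero {c : ℝ} (hc : 0 < c) :
    Tendsto (fun ε : ℝ => c * ε) (𝓝[>] 0) (𝓝[>] 0) := by
  refine tendsto_nhdsWithin_iff.2
    ⟨tendsto_nhdsWithin_of_tendsto_nhds ((continuous_const_mul c).tendsto' 0 0 (mul_zero c)), ?_⟩
  filter_upwards [self_mem_nhdsWithin] with ε hε using mul_pos hc hε

lemma tendsto_sq_div_two_add_log_stdNormalQuantile_sub_log :
    Tendsto (fun ε => stdNormalQuantile (1 - ε) ^ 2 / 2 + log (stdNormalQuantile (1 - ε))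
      - log ε⁻¹) (𝓝[>] 0) (𝓝 (-log √(2 * π))) := by
  have hratio := ((continuousAt_log one_ne_zero).tendsto.comp
    (tendsto_mul_stdNormalTail_div_gaussianPDFReal.comp tendsto_stdNormalQuantile_one_sub))
  rw [log_one] at hratio
  have h := hratio.const_add (-log √(2 * π))
  rw [add_zero] at h
  refine h.congr' ?_
  filter_upwards [tendsto_stdNormalQuantile_one_sub.eventually_gt_atTop 0,
    Ioo_mem_nhdsGT one_pos] with ε hq hε
  have htail : log ε⁻¹ = -log (stdNormalTail (stdNormalQuantile (1 - ε))) := by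
    rw [log_inv, stdNormalTail_stdNormalQuantile_one_sub hε]
  rw [sq_div_two_add_log_eq_neg_log_stdNormalTail hq, htail]
  simp only [Function.comp_apply]
  ring

lemma tendsto_stdNormalQuantile_one_sub_sq_div_log :
    Tendsto (fun ε => stdNormalQuantile (1 - ε) ^ 2 / log ε⁻¹) (𝓝[>] 0) (𝓝 2) := by
  set q := fun ε : ℝ => stdNormalQuantile (1 - ε)
  set E := fun ε : ℝ => q ε ^ 2 / 2 + log (q ε) - log ε⁻¹
  have hnum : Tendsto (fun ε => 1 + E ε / log ε⁻¹) (𝓝[>] 0) (𝓝 (1 + 0)) :=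
    (tendsto_sq_div_two_add_log_stdNormalQuantile_sub_log.div_atTop
      tendsto_log_inv_nhdsGT_zero).const_add 1
  have hden : Tendsto (fun ε => 1 + 2 * (log (q ε) / q ε ^ 2)) (𝓝[>] 0) (𝓝 (1 + 2 * 0)) :=
    ((tendsto_log_div_sq_atTop.comp tendsto_stdNormalQuantile_one_sub).const_mul 2).const_add 1
  have h := (hnum.div hden (by norm_num)).const_mul 2
  rw [add_zero, mul_zero, add_zero, div_one, mul_one] at h
  refine h.congr' ?_
  filter_upwards [tendsto_stdNormalQuantile_one_sub.eventually_gt_atTop 1,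
    tendsto_log_inv_nhdsGT_zero.eventually_gt_atTop 0] with ε (hq : 1 < q ε) hL
  have hlogq := log_pos hq
  have hden0 : 1 + 2 * (log (q ε) / q ε ^ 2) ≠ 0 := by positivity
  change 2 * ((1 + E ε / log ε⁻¹) / (1 + 2 * (log (q ε) / q ε ^ 2))) = q ε ^ 2 / log ε⁻¹
  simp only [E]
  generalize log ε⁻¹ = L at hL ⊢
  field_simp
  ring

lemma tendsto_stdNormalQuantile_one_sub_const_mul_sq_div_log {c : ℝ} (hc : 0 < c) :
    Tendsto (fun ε => stdNormalQuantile (1 - c * ε) ^ 2 / log ε⁻¹) (𝓝[>] 0) (𝓝 2) := by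
  have hratio : Tendsto (fun ε => 1 + log c⁻¹ / log ε⁻¹) (𝓝[>] 0) (𝓝 (1 + 0)) :=
    (tendsto_const_nhds.div_atTop tendsto_log_inv_nhdsGT_zero).const_add 1
  have h := (tendsto_stdNormalQuantile_one_sub_sq_div_log.comp
    (tendsto_const_mul_nhdsGT_zero hc)).mul hratio
  rw [add_zero, mul_one] at h
  refine h.congr' ?_
  filter_upwards [tendsto_log_inv_nhdsGT_zero.eventually_gt_atTop 0,
    (tendsto_log_inv_nhdsGT_zero.comp (tendsto_const_mul_nhdsGT_zero hc)).eventually_gt_atTop 0,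
    self_mem_nhdsWithin] with ε hL hcL (hε : 0 < ε)
  have hsplit : log (c * ε)⁻¹ = log c⁻¹ + log ε⁻¹ := by
    rw [mul_inv, log_mul (inv_ne_zero hc.ne') (inv_ne_zero hε.ne')]
  simp only [Function.comp_apply, hsplit] at hcL ⊢
  generalize log c⁻¹ = a at hcL ⊢
  generalize log ε⁻¹ = L at hL hcL ⊢
  field_simp
  ring

lemma tendsto_stdNormalQuantile_one_sub_const_mul_sq_sub_sq {c : ℝ} (hc : 0 < c) :
    Tendsto (fun ε => stdNormalQuantile (1 - c * ε) ^ 2 - stdNormalQuantile (1 - ε) ^ 2)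
      (𝓝[>] 0) (𝓝 (2 * log c⁻¹)) := by
  have hE := tendsto_sq_div_two_add_log_stdNormalQuantile_sub_log
  have hE' := hE.comp (tendsto_const_mul_nhdsGT_zero hc)
  have hlog := (continuousAt_log two_ne_zero).tendsto.comp
    tendsto_stdNormalQuantile_one_sub_sq_div_log
  have hlog' := (continuousAt_log two_ne_zero).tendsto.comp
    (tendsto_stdNormalQuantile_one_sub_const_mul_sq_div_log hc)
  have h := (((hE'.sub hE).const_mul 2).sub (hlog'.sub hlog)).add_const (2 * log c⁻¹)
  rw [sub_self, sub_self, mul_zero, sub_zero, zero_add] at h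
  refine h.congr' ?_
  filter_upwards [tendsto_stdNormalQuantile_one_sub.eventually_gt_atTop 0,
    (tendsto_stdNormalQuantile_one_sub.comp
      (tendsto_const_mul_nhdsGT_zero hc)).eventually_gt_atTop 0,
    tendsto_log_inv_nhdsGT_zero.eventually_gt_atTop 0, self_mem_nhdsWithin]
    with ε hq hq' hL (hε : 0 < ε)
  simp only [Function.comp_apply] at hq' ⊢
  rw [log_div (by positivity) hL.ne', log_div (by positivity) hL.ne', log_pow, log_pow, mul_inv,
    log_mul (inv_ne_zero hc.ne') (inv_ne_zero hε.ne')]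
  push_cast
  ring

lemma tendsto_stdNormalQuantile_one_sub_const_mul_sub_mul_sqrt_log {c : ℝ} (hc : 0 < c) :
    Tendsto (fun ε => (stdNormalQuantile (1 - c * ε) - stdNormalQuantile (1 - ε)) * √(log ε⁻¹))
      (𝓝[>] 0) (𝓝 (log c⁻¹ / √2)) := by
  have h := (tendsto_stdNormalQuantile_one_sub_const_mul_sq_sub_sq hc).div
    (tendsto_stdNormalQuantile_one_sub_sq_div_log.sqrt.add
      (tendsto_stdNormalQuantile_one_sub_const_mul_sq_div_log hc).sqrt) (by positivity)
  rw [show 2 * log c⁻¹ / (√2 + √2) = log c⁻¹ / √2 by ring] at h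
  refine h.congr' ?_
  filter_upwards [tendsto_stdNormalQuantile_one_sub.eventually_gt_atTop 0,
    (tendsto_stdNormalQuantile_one_sub.comp
      (tendsto_const_mul_nhdsGT_zero hc)).eventually_gt_atTop 0,
    tendsto_log_inv_nhdsGT_zero.eventually_gt_atTop 0] with ε hq hq' hL
  simp only [Function.comp_apply] at hq'
  simp only [Pi.div_apply]
  have hsL : 0 < √(log ε⁻¹) := sqrt_pos.2 hL
  rw [sqrt_div (sq_nonneg _), sqrt_div (sq_nonneg _), sqrt_sq hq.le, sqrt_sq hq'.le]
  field_simp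
  ring

lemma tendsto_log_div_log_add_atTop (a : ℝ) :
    Tendsto (fun x => log x / log (x + a)) atTop (𝓝 1) := by
  have hlog : Tendsto (fun x => log (x + a)) atTop atTop :=
    tendsto_log_atTop.comp (tendsto_atTop_add_const_right _ a tendsto_id)
  have h := ((tendsto_log_comp_add_sub_log a).div_atTop hlog).const_sub 1
  rw [sub_zero] at h
  refine h.congr' ?_
  filter_upwards [hlog.eventually_gt_atTop 0] with x hx
  field_simp
  ring

/-- For fixed `δ ∈ (0,1)`, as `K → ∞`,
`z_{(K+δ)/(K+1)} - z_{K/(K+1)} = (-log(1-δ))/√(2 log K) + o(1/√(log K))`, i.e. the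
difference between the two sides, multiplied by `√(log K)`, tends to `0`. -/
theorem stdNormalQuantile_gap_asymptotic (δ : ℝ) (hδ : δ ∈ Set.Ioo (0 : ℝ) 1) :
    Tendsto
      (fun K : ℝ =>
        (stdNormalQuantile ((K + δ) / (K + 1)) - stdNormalQuantile (K / (K + 1))
            - (-Real.log (1 - δ)) / Real.sqrt (2 * Real.log K)) * Real.sqrt (Real.log K))
      atTop (nhds 0) := by
  have hc : 0 < 1 - δ := by linarith [hδ.2]
  have hε : Tendsto (fun K : ℝ => (K + 1)⁻¹) atTop (𝓝[>] 0) :=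
    tendsto_inv_atTop_nhdsGT_zero.comp (tendsto_atTop_add_const_right _ 1 tendsto_id)
  have h := (((tendsto_stdNormalQuantile_one_sub_const_mul_sub_mul_sqrt_log hc).comp hε).mul
    (tendsto_log_div_log_add_atTop 1).sqrt).sub_const (log (1 - δ)⁻¹ / √2)
  rw [sqrt_one, mul_one, sub_self] at h
  refine h.congr' ?_
  filter_upwards [eventually_gt_atTop 1] with K hK
  have hlogK : 0 < log K := log_pos hK
  have hlogK1 : 0 < log (K + 1) := log_pos (by linarith)
  rw [Function.comp_apply, inv_inv, log_inv,
    show 1 - (1 - δ) * (K + 1)⁻¹ = (K + δ) / (K + 1) by field_simp; ring,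
    show 1 - (K + 1)⁻¹ = K / (K + 1) by field_simp; ring,
    sqrt_div hlogK.le, sqrt_mul zero_le_two]
  have := sqrt_pos.2 hlogK
  have := sqrt_pos.2 hlogK1
  field_simp
end
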